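/- arXiv:2309.09114 — 2 statements merged into one kernel-verified Lean document; each statement's English description precedes it below -/
import Mathlib

section
/- For every b > 1, every α ∈ (0,1), and every integer N ≥ 2, one has (1 - b^(1-N))/(N-1) ≤ (b-1)^α · ((1-α)/(N+α-1))^(1-α). -/
open MeasureTheory Real intervalIntegral Set

/-! The left-hand side is `∫₁ᵇ t^(-N) dt`. Hölder's inequality for `1 · t^(-N)` with exponents
`1/α` and `1/(1-α)` bounds it by `(b-1)^α (∫₁ᵇ t^(-N/(1-α)) dt)^(1-α)`, and the last integral is
at most `1/(N/(1-α) - 1) = (1-α)/(N+α-1)`. -/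

theorem integral_le_measureReal_univ_rpow_mul_integral_rpow {X : Type*} [MeasurableSpace X]
    {μ : Measure X} [IsFiniteMeasure μ] {α : ℝ} (hα₀ : 0 < α) (hα₁ : α < 1) {g : X → ℝ}
    (hg₀ : 0 ≤ᵐ[μ] g) (hg : MemLp g (ENNReal.ofReal (1 - α)⁻¹) μ) :
    ∫ x, g x ∂μ ≤ μ.real univ ^ α * (∫ x, g x ^ (1 - α)⁻¹ ∂μ) ^ (1 - α) := by
  simpa using integral_mul_le_Lp_mul_Lq_of_nonneg (.inv_one_sub_inv hα₀ hα₁)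
    (ae_of_all μ fun _ => zero_le_one) hg₀ (memLp_const 1) hg

theorem integral_one_to_rpow_neg {s b : ℝ} (hs : 1 < s) (hb : 1 ≤ b) :
    ∫ t in (1 : ℝ)..b, t ^ (-s) = (1 - b ^ (1 - s)) / (s - 1) := by
  have h0 : (0 : ℝ) ∉ uIcc 1 b := by
    rw [uIcc_of_le hb]; exact fun h => by linarith [h.1]
  rw [integral_rpow (.inr ⟨by linarith, h0⟩), one_rpow, ← neg_div_neg_eq]
  ring_nf

theorem integral_one_to_rpow_neg_le {s b : ℝ} (hs : 1 < s) (hb : 1 ≤ b) :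
    ∫ t in (1 : ℝ)..b, t ^ (-s) ≤ 1 / (s - 1) := by
  rw [integral_one_to_rpow_neg hs hb]
  gcongr
  exact sub_le_self _ (rpow_nonneg (zero_le_one.trans hb) _)

theorem memLp_rpow_neg_restrict_Ioc {s : ℝ} (hs : 0 ≤ s) (b : ℝ) (p : ENNReal) :
    MemLp (fun t : ℝ => t ^ (-s)) p (volume.restrict (Ioc 1 b)) := by
  refine .of_bound (measurable_id.pow_const _).aestronglyMeasurable 1 ?_
  filter_upwards [ae_restrict_mem measurableSet_Ioc] with t ht
  rw [norm_of_nonneg (rpow_nonneg (by linarith [ht.1]) _)]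
  exact rpow_le_one_of_one_le_of_nonpos ht.1.le (neg_nonpos.mpr hs)

/-- For every `b > 1`, every `α ∈ (0,1)` and every integer `N ≥ 2`,
`(1 - b^(1-N))/(N-1) ≤ (b-1)^α · ((1-α)/(N+α-1))^(1-α)`. -/
theorem stmt1 (b α : ℝ) (N : ℕ) (hb : 1 < b) (hα : α ∈ Set.Ioo (0:ℝ) 1) (hN : 2 ≤ N) :
    (1 - b ^ (1 - (N : ℝ))) / ((N : ℝ) - 1) ≤
      (b - 1) ^ α * ((1 - α) / ((N : ℝ) + α - 1)) ^ (1 - α) := by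
  obtain ⟨hα₀, hα₁⟩ := hα
  have hN₁ : (1 : ℝ) < N := by exact_mod_cast hN
  have hs : 1 < (N : ℝ) * (1 - α)⁻¹ := by
    rw [← div_eq_mul_inv, one_lt_div (by linarith)]; linarith
  have hpow : ∫ t in Ioc 1 b, (t ^ (-(N : ℝ))) ^ (1 - α)⁻¹ =
      ∫ t in (1 : ℝ)..b, t ^ (-((N : ℝ) * (1 - α)⁻¹)) := by
    rw [integral_of_le hb.le]
    refine setIntegral_congr_fun measurableSet_Ioc fun t ht => ?_
    rw [← rpow_mul (by linarith [ht.1]), neg_mul]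
  calc (1 - b ^ (1 - (N : ℝ))) / ((N : ℝ) - 1)
      = ∫ t in Ioc 1 b, t ^ (-(N : ℝ)) := by
        rw [← integral_of_le hb.le, integral_one_to_rpow_neg hN₁ hb.le]
    _ ≤ volume.real (Ioc 1 b) ^ α *
          (∫ t in Ioc 1 b, (t ^ (-(N : ℝ))) ^ (1 - α)⁻¹) ^ (1 - α) := by
        simpa only [measureReal_restrict_apply_univ] using
          integral_le_measureReal_univ_rpow_mul_integral_rpow hα₀ hα₁
            (ae_restrict_of_forall_mem measurableSet_Ioc fun t ht =>
              rpow_nonneg (by linarith [ht.1]) _)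
            (memLp_rpow_neg_restrict_Ioc (Nat.cast_nonneg N) b _)
    _ ≤ (b - 1) ^ α * (1 / ((N : ℝ) * (1 - α)⁻¹ - 1)) ^ (1 - α) := by
        rw [volume_real_Ioc_of_le hb.le, hpow]
        gcongr
        · exact integral_nonneg hb.le fun t ht => rpow_nonneg (by linarith [ht.1]) _
        exact integral_one_to_rpow_neg_le hs hb.le
    _ = (b - 1) ^ α * ((1 - α) / ((N : ℝ) + α - 1)) ^ (1 - α) := by
        congr 2
        field_simp
        ring
end

section
/- Let s ∈ (0, 1/2) and N ≥ 1. Let ρ ∈ C_c^∞((-2,2)) with 0 ≤ ρ ≤ 1 and ρ = 1 on (-1,1). Then the double integral over ℝ^N × ℝ^N of (ρ(|y|²) - ρ(|z|²))(|z|^{2s-N} - |y|^{2s-N}) / |z - y|^{N+2s} dy dz is absolutely convergent. -/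
open MeasureTheory
open Metric Set
open scoped ENNReal NNReal

-- helper: (x^k)^a = (x^a)^k
lemma pow_rpow_comm {x : ℝ} (hx : 0 ≤ x) (a : ℝ) (k : ℕ) : ((x ^ k : ℝ)) ^ a = (x ^ a) ^ k := by
  rw [← Real.rpow_natCast x k, ← Real.rpow_mul hx, mul_comm, Real.rpow_mul hx, Real.rpow_natCast]

lemma integrableOn_rpow_norm_closedBall (N : ℕ) {p : ℝ}
    (hp : -(N:ℝ) < p) (hp0 : p < 0) {R : ℝ} (hR : 0 < R) :
    IntegrableOn (fun x : EuclideanSpace ℝ (Fin N) => ‖x‖ ^ p) (closedBall 0 R) := by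
  have hmeas : Measurable (fun x : EuclideanSpace ℝ (Fin N) => ‖x‖ ^ p) := by
    measurability
  refine ⟨hmeas.aestronglyMeasurable.restrict, ?_⟩
  rw [hasFiniteIntegral_iff_ofReal (ae_of_all _ fun x => Real.rpow_nonneg (norm_nonneg x) p)]
  set E := EuclideanSpace ℝ (Fin N)
  set g : E → ℝ≥0∞ := fun x => ENNReal.ofReal (‖x‖ ^ p) with hg
  set B : ℕ → Set E := fun k => {x : E | R * (1/2)^(k+1) < ‖x‖ ∧ ‖x‖ ≤ R * (1/2)^k} with hB
  have hcover : closedBall (0:E) R ⊆ (⋃ k, B k) ∪ {0} := by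
    intro x hx
    rcases eq_or_ne x 0 with h0 | h0
    · exact Or.inr h0
    refine Or.inl ?_
    have hxpos : 0 < ‖x‖ := norm_pos_iff.2 h0
    have hxR : ‖x‖ ≤ R := by simpa [dist_zero_right] using hx
    have hex : ∃ m : ℕ, R * (1/2)^(m+1) < ‖x‖ := by
      obtain ⟨n, hn⟩ := exists_pow_lt_of_lt_one (div_pos hxpos hR) (by norm_num : (1/2:ℝ) < 1)
      refine ⟨n, ?_⟩
      have : R * (1/2)^n < ‖x‖ := by
        rw [mul_comm, ← lt_div_iff₀ hR]; exact hn
      have h2 : R * (1/2)^(n+1) ≤ R * (1/2)^n := by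
        apply mul_le_mul_of_nonneg_left _ hR.le
        apply pow_le_pow_of_le_one (by norm_num) (by norm_num)
        omega
      linarith
    classical
    set k := Nat.find hex with hk
    have hk1 : R * (1/2)^(k+1) < ‖x‖ := Nat.find_spec hex
    have hk2 : ‖x‖ ≤ R * (1/2)^k := by
      rcases Nat.eq_zero_or_pos k with h | h
      · rw [h]; simpa using hxR
      · have := Nat.find_min hex (m := k - 1) (by omega)
        push_neg at this
        have hke : k - 1 + 1 = k := by omega
        rwa [hke] at this
    exact mem_iUnion.2 ⟨k, hk1, hk2⟩
  set V : ℝ≥0∞ := volume (ball (0:E) 1) with hV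
  have hBsub : ∀ k, B k ⊆ closedBall (0:E) (R * (1/2)^k) := by
    intro k x hx
    simpa [dist_zero_right] using hx.2
  have hbound : ∀ k, ∫⁻ x in B k, g x ≤
      ENNReal.ofReal ((R * (1/2)^(k+1)) ^ p * (R * (1/2)^k) ^ N) * V := by
    intro k
    have hpos1 : (0:ℝ) < R * (1/2)^(k+1) := by positivity
    calc ∫⁻ x in B k, g x ≤ ∫⁻ _x in B k, ENNReal.ofReal ((R * (1/2)^(k+1)) ^ p) := by
          apply setLIntegral_mono measurable_const
          intro x hx
          exact ENNReal.ofReal_le_ofReal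
            (Real.rpow_le_rpow_of_nonpos hpos1 hx.1.le hp0.le)
      _ = ENNReal.ofReal ((R * (1/2)^(k+1)) ^ p) * volume (B k) := setLIntegral_const _ _
      _ ≤ ENNReal.ofReal ((R * (1/2)^(k+1)) ^ p) *
            (ENNReal.ofReal ((R * (1/2)^k) ^ N) * V) := by
          gcongr
          calc volume (B k) ≤ volume (closedBall (0:E) (R * (1/2)^k)) :=
                measure_mono (hBsub k)
            _ = ENNReal.ofReal ((R * (1/2)^k) ^ Module.finrank ℝ E) * V := by
                rw [Measure.addHaar_closedBall _ _ (by positivity)]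
            _ = ENNReal.ofReal ((R * (1/2)^k) ^ N) * V := by
                rw [show Module.finrank ℝ E = N from finrank_euclideanSpace_fin]
      _ = ENNReal.ofReal ((R * (1/2)^(k+1)) ^ p * (R * (1/2)^k) ^ N) * V := by
          rw [ENNReal.ofReal_mul (Real.rpow_nonneg hpos1.le p), mul_assoc]
  -- geometric series
  set q : ℝ≥0∞ := ENNReal.ofReal ((1/2:ℝ) ^ p * (1/2:ℝ) ^ (N:ℕ)) with hq
  set D : ℝ≥0∞ := ENNReal.ofReal ((R * (1/2)) ^ p * R ^ N) with hD
  have hterm : ∀ k, ENNReal.ofReal ((R * (1/2)^(k+1)) ^ p * (R * (1/2)^k) ^ N)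
      = D * q ^ k := by
    intro k
    have e1 : (R * (1/2)^(k+1) : ℝ) ^ p = (R * (1/2)) ^ p * ((1/2:ℝ) ^ p) ^ k := by
      rw [show (R * (1/2)^(k+1) : ℝ) = (R * (1/2)) * (1/2)^k by ring,
        Real.mul_rpow (by positivity) (by positivity), pow_rpow_comm (by norm_num) p k]
    have e2 : ((R * (1/2)^k : ℝ)) ^ N = R ^ N * ((1/2:ℝ) ^ (N:ℕ)) ^ k := by
      rw [mul_pow, ← pow_mul, ← pow_mul, Nat.mul_comm]
    rw [e1, e2, hD, hq, ← ENNReal.ofReal_pow (by positivity), ← ENNReal.ofReal_mul (by positivity)]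
    congr 1
    ring
  have hqlt : q < 1 := by
    rw [hq]
    apply ENNReal.ofReal_lt_one.2
    have : (1/2:ℝ) ^ p * (1/2:ℝ) ^ (N:ℕ) = (1/2:ℝ) ^ (p + N) := by
      rw [← Real.rpow_natCast (1/2 : ℝ) N, ← Real.rpow_add (by norm_num)]
    rw [this]
    exact Real.rpow_lt_one (by norm_num) (by norm_num) (by linarith)
  calc ∫⁻ x in closedBall (0:E) R, g x ≤ ∫⁻ x in (⋃ k, B k) ∪ {0}, g x :=
        lintegral_mono_set hcover
    _ ≤ (∫⁻ x in ⋃ k, B k, g x) + ∫⁻ x in ({0} : Set E), g x := lintegral_union_le _ _ _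
    _ ≤ (∑' k, ∫⁻ x in B k, g x) + 0 := by
        gcongr
        · exact lintegral_iUnion_le _ _
        · rw [lintegral_singleton]
          simp [hg, Real.zero_rpow hp0.ne]
    _ ≤ (∑' k, D * q ^ k * V) + 0 := by
        gcongr with k
        rw [← hterm k]
        exact hbound k
    _ = D * (1 - q)⁻¹ * V := by
        rw [add_zero]
        calc ∑' k, D * q ^ k * V = ∑' k, (D * V) * q ^ k := by
              exact tsum_congr fun k => by ring
          _ = (D * V) * ∑' k, q ^ k := ENNReal.tsum_mul_left
          _ = D * (1 - q)⁻¹ * V := by rw [ENNReal.tsum_geometric]; ring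
    _ < ⊤ := by
        apply ENNReal.mul_lt_top
        apply ENNReal.mul_lt_top
        · exact ENNReal.ofReal_lt_top
        · exact ENNReal.inv_lt_top.2 (tsub_pos_of_lt hqlt)
        · exact measure_ball_lt_top

lemma integrableOn_rpow_norm_compl (N : ℕ) {p : ℝ} (hp : p < -(N:ℝ)) :
    IntegrableOn (fun x : EuclideanSpace ℝ (Fin N) => ‖x‖ ^ p)
      {x : EuclideanSpace ℝ (Fin N) | 1 ≤ ‖x‖} := by
  set E := EuclideanSpace ℝ (Fin N)
  have hfr : (Module.finrank ℝ E : ℝ) < -p := by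
    rw [show Module.finrank ℝ E = N from finrank_euclideanSpace_fin]; linarith
  have hbase : Integrable (fun x : E => (1 + ‖x‖) ^ (-(-p))) volume :=
    integrable_one_add_norm hfr
  rw [neg_neg] at hbase
  have hmeasS : MeasurableSet {x : E | 1 ≤ ‖x‖} := by
    exact measurableSet_le measurable_const measurable_norm
  have hdom : Integrable (fun x : E => (2:ℝ) ^ (-p) * (1 + ‖x‖) ^ p) volume :=
    hbase.const_mul _
  refine Integrable.mono' hdom.integrableOn ?_ ?_
  · exact (Measurable.aestronglyMeasurable (by measurability)).restrict
  · rw [ae_restrict_iff' hmeasS]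
    apply ae_of_all
    intro x hx
    have hx1 : (1:ℝ) ≤ ‖x‖ := hx
    have h0 : (0:ℝ) < (1 + ‖x‖)/2 := by linarith
    have hle : (1 + ‖x‖)/2 ≤ ‖x‖ := by linarith
    have h1 : ‖x‖ ^ p ≤ ((1 + ‖x‖)/2) ^ p :=
      Real.rpow_le_rpow_of_nonpos h0 hle (by linarith : p ≤ 0)
    have h2 : ((1 + ‖x‖)/2) ^ p = (2:ℝ)^(-p) * (1 + ‖x‖) ^ p := by
      rw [Real.div_rpow (by linarith) (by norm_num), Real.rpow_neg (by norm_num)]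
      ring
    rw [Real.norm_eq_abs, abs_of_nonneg (Real.rpow_nonneg (norm_nonneg x) p)]
    rw [h2] at h1
    exact h1

lemma integrable_phi (N : ℕ) {lam : ℝ} (hlam1 : 1 < lam) (hlamN : (N:ℝ) < lam)
    (hlub : lam < (N:ℝ) + 1) :
    Integrable (fun w : EuclideanSpace ℝ (Fin N) => min 1 ‖w‖ * ‖w‖ ^ (-lam)) volume := by
  set E := EuclideanSpace ℝ (Fin N)
  have hmeas : Measurable (fun w : E => min 1 ‖w‖ * ‖w‖ ^ (-lam)) := by
    measurability
  have hnonneg : ∀ w : E, 0 ≤ min 1 ‖w‖ * ‖w‖ ^ (-lam) := fun w =>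
    mul_nonneg (le_min zero_le_one (norm_nonneg w)) (Real.rpow_nonneg (norm_nonneg w) _)
  rw [← integrableOn_univ, ← union_compl_self (closedBall (0:E) 1)]
  apply IntegrableOn.union
  · -- on the ball: dominated by ‖w‖ ^ (1 - lam)
    have hint : IntegrableOn (fun x : E => ‖x‖ ^ (1 - lam)) (closedBall 0 1) :=
      integrableOn_rpow_norm_closedBall N (by linarith) (by linarith) one_pos
    refine Integrable.mono' hint hmeas.aestronglyMeasurable.restrict ?_
    rw [ae_restrict_iff' measurableSet_closedBall]
    apply ae_of_all
    intro w _
    rw [Real.norm_eq_abs, abs_of_nonneg (hnonneg w)]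
    rcases eq_or_ne w 0 with h0 | h0
    · simp [h0, Real.zero_rpow (by linarith : 1 - lam ≠ 0)]
    · have hw : 0 < ‖w‖ := norm_pos_iff.2 h0
      have : ‖w‖ ^ (1 - lam) = ‖w‖ * ‖w‖ ^ (-lam) := by
        rw [show (1 - lam) = 1 + (-lam) by ring, Real.rpow_add hw, Real.rpow_one]
      rw [this]
      exact mul_le_mul_of_nonneg_right (min_le_right _ _)
        (Real.rpow_nonneg (norm_nonneg w) _)
  · -- off the ball
    have hint : IntegrableOn (fun x : E => ‖x‖ ^ (-lam)) {x : E | 1 ≤ ‖x‖} :=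
      integrableOn_rpow_norm_compl N (by linarith)
    have hsub : (closedBall (0:E) 1)ᶜ ⊆ {x : E | 1 ≤ ‖x‖} := by
      intro x hx
      simp only [mem_compl_iff, mem_closedBall, dist_zero_right, not_le] at hx
      exact le_of_lt hx
    refine Integrable.mono' (hint.mono_set hsub) hmeas.aestronglyMeasurable.restrict ?_
    apply ae_of_all
    intro w
    rw [Real.norm_eq_abs, abs_of_nonneg (hnonneg w)]
    exact mul_le_of_le_one_left (Real.rpow_nonneg (norm_nonneg w) _) (min_le_left _ _)

/-- auxiliary radial profile -/
noncomputable def auxH (κ t : ℝ) : ℝ := if t ≤ 3 then t ^ κ + 1 else 0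

lemma auxH_nonneg {κ t : ℝ} (ht : 0 ≤ t) : 0 ≤ auxH κ t := by
  unfold auxH
  split
  · have := Real.rpow_nonneg ht κ; linarith
  · exact le_refl 0

lemma auxH_indicator (N : ℕ) (κ : ℝ) (y : EuclideanSpace ℝ (Fin N)) :
    auxH κ ‖y‖ = (closedBall (0:EuclideanSpace ℝ (Fin N)) 3).indicator
      (fun x => ‖x‖ ^ κ + 1) y := by
  unfold auxH
  by_cases h : ‖y‖ ≤ 3
  · rw [if_pos h, indicator_of_mem (by simpa [dist_zero_right] using h)]
  · rw [if_neg h, indicator_of_notMem (by simpa [dist_zero_right] using h)]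

lemma integrable_auxH (N : ℕ) {κ : ℝ} (hκ : -(N:ℝ) < κ) (hκ0 : κ < 0) :
    Integrable (fun y : EuclideanSpace ℝ (Fin N) => auxH κ ‖y‖) volume := by
  have : IntegrableOn (fun x : EuclideanSpace ℝ (Fin N) => ‖x‖ ^ κ + 1)
      (closedBall 0 3) volume := by
    apply (integrableOn_rpow_norm_closedBall N hκ hκ0 (by norm_num)).add
    exact integrableOn_const measure_closedBall_lt_top.ne enorm_ne_top
  have h2 := this.integrable_indicator measurableSet_closedBall
  apply h2.congr
  exact ae_of_all _ fun y => (auxH_indicator N κ y).symm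

section prodint
variable (N : ℕ)

lemma integrable_prod_left {F G : EuclideanSpace ℝ (Fin N) → ℝ}
    (hF : Integrable F volume) (hG : Integrable G volume) :
    Integrable (fun q : EuclideanSpace ℝ (Fin N) × EuclideanSpace ℝ (Fin N) =>
      F q.1 * G (q.2 - q.1)) (volume.prod volume) := by
  have T : MeasurePreserving
      (fun z : EuclideanSpace ℝ (Fin N) × EuclideanSpace ℝ (Fin N) => (z.1, z.1 + z.2))
      (volume.prod volume) (volume.prod volume) :=
    measurePreserving_prod_add volume volume
  have emb : MeasurableEmbedding
      (fun z : EuclideanSpace ℝ (Fin N) × EuclideanSpace ℝ (Fin N) => (z.1, z.1 + z.2)) :=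
    (MeasurableEquiv.shearAddRight (EuclideanSpace ℝ (Fin N))).measurableEmbedding
  refine (T.integrable_comp_emb emb).1 ?_
  apply (hF.mul_prod hG).congr
  apply ae_of_all
  intro z
  simp [Function.comp]

lemma integrable_prod_right {F G : EuclideanSpace ℝ (Fin N) → ℝ}
    (hF : Integrable F volume) (hG : Integrable G volume) :
    Integrable (fun q : EuclideanSpace ℝ (Fin N) × EuclideanSpace ℝ (Fin N) =>
      F q.2 * G (q.2 - q.1)) (volume.prod volume) := by
  have hGneg : Integrable (fun w : EuclideanSpace ℝ (Fin N) => G (-w)) volume := hG.comp_neg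
  have h1 := integrable_prod_left N hF hGneg
  have T : MeasurePreserving
      (Prod.swap : EuclideanSpace ℝ (Fin N) × EuclideanSpace ℝ (Fin N) → _)
      (volume.prod volume) (volume.prod volume) :=
    Measure.measurePreserving_swap
  have emb : MeasurableEmbedding
      (Prod.swap : EuclideanSpace ℝ (Fin N) × EuclideanSpace ℝ (Fin N) → _) :=
    MeasurableEquiv.prodComm.measurableEmbedding
  refine (T.integrable_comp_emb emb).1 ?_
  apply h1.congr
  apply ae_of_all
  intro z
  simp only [Function.comp_apply, Prod.fst_swap, Prod.snd_swap, neg_sub]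

end prodint

lemma realkey' (N : ℕ) (hN : 1 ≤ N) {s L : ℝ} (hs0 : 0 < s) (hs1 : 2*s < 1) (hL : 0 ≤ L)
    {a b r d : ℝ} (ha : 0 ≤ a) (hb : 0 ≤ b) (hr : 0 ≤ r)
    (hab : |a - b| ≤ r) (hrab : r ≤ a + b)
    (hd1 : |d| ≤ 1) (hdL : |d| ≤ L * |a^2 - b^2|)
    (ha2 : a^2 < 2) :
    |d| * |b ^ (2*s-(N:ℝ)) - a ^ (2*s-(N:ℝ))| / r ^ ((N:ℝ)+2*s) ≤
      (6*L + 2^(N:ℝ) + 2) *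
        ((auxH (2*s-(N:ℝ)) a + auxH (2*s-(N:ℝ)) b) * (min 1 r * r ^ (-((N:ℝ)+2*s)))) := by
  set κ : ℝ := 2*s - N with hκdef
  set lam : ℝ := N + 2*s with hlamdef
  set C : ℝ := 6*L + 2^(N:ℝ) + 2 with hCdef
  have hN1 : (1:ℝ) ≤ N := by exact_mod_cast hN
  have hκ0 : κ < 0 := by rw [hκdef]; linarith
  have h2N : (0:ℝ) < 2^(N:ℝ) := Real.rpow_pos_of_pos (by norm_num) _
  have hC0 : 0 ≤ C := by rw [hCdef]; linarith
  have haκ : 0 ≤ a ^ κ := Real.rpow_nonneg ha κ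
  have hbκ : 0 ≤ b ^ κ := Real.rpow_nonneg hb κ
  have hha : 0 ≤ auxH κ a := auxH_nonneg ha
  have hhb : 0 ≤ auxH κ b := auxH_nonneg hb
  have hrκ : 0 ≤ r ^ lam := Real.rpow_nonneg hr lam
  have hP : |b ^ κ - a ^ κ| ≤ a ^ κ + b ^ κ := by
    have := abs_sub (b ^ κ) (a ^ κ)
    rw [abs_of_nonneg hbκ, abs_of_nonneg haκ] at this
    linarith
  have ha15 : a < 1.5 := by nlinarith
  have hRHS0 : 0 ≤ (auxH κ a + auxH κ b) * (min 1 r * r ^ (-lam)) :=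
    mul_nonneg (add_nonneg hha hhb)
      (mul_nonneg (le_min zero_le_one hr) (Real.rpow_nonneg hr _))
  -- dispatch the degenerate case r = 0
  rcases eq_or_lt_of_le hr with hr0 | hr0
  · have hab0 : a = b := by
      rw [← hr0] at hab
      have := abs_nonneg (a - b)
      have : |a - b| = 0 := le_antisymm hab this
      have := abs_eq_zero.1 this
      linarith
    have : |d| = 0 := by
      rw [hab0] at hdL
      simpa using le_antisymm (by simpa using hdL) (abs_nonneg d)
    rw [this, zero_mul, zero_div]
    exact mul_nonneg hC0 hRHS0
  -- now r > 0
  have hauxa : auxH κ a = a ^ κ + 1 := if_pos (by linarith)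
  rcases le_or_gt r 1 with hr1 | hr1
  · -- near regime
    have hb25 : b ≤ 2.5 := by
      have : b - a ≤ |a - b| := by rw [abs_sub_comm]; exact le_abs_self _
      linarith
    have hauxb : auxH κ b = b ^ κ + 1 := if_pos (by linarith)
    have hd4 : |d| ≤ 4 * L * r := by
      have he : |a^2 - b^2| = (a + b) * |a - b| := by
        rw [show a^2 - b^2 = (a+b)*(a-b) by ring, abs_mul, abs_of_nonneg (by linarith)]
      have h1 : |a^2 - b^2| ≤ 4 * r := by
        rw [he]
        have : (a + b) * |a - b| ≤ 4 * r :=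
          mul_le_mul (by linarith) hab (abs_nonneg _) (by norm_num)
        linarith
      calc |d| ≤ L * |a^2 - b^2| := hdL
        _ ≤ L * (4 * r) := mul_le_mul_of_nonneg_left h1 hL
        _ = 4 * L * r := by ring
    rw [min_eq_right hr1, Real.rpow_neg hr, div_eq_mul_inv]
    have hinv : (0:ℝ) ≤ (r ^ lam)⁻¹ := inv_nonneg.2 hrκ
    have hPh : |b ^ κ - a ^ κ| ≤ auxH κ a + auxH κ b := by
      rw [hauxa, hauxb]; linarith
    calc |d| * |b ^ κ - a ^ κ| * (r ^ lam)⁻¹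
        ≤ (4 * L * r) * ((auxH κ a + auxH κ b) * (r ^ lam)⁻¹) := by
          rw [mul_assoc]
          exact mul_le_mul hd4
            (mul_le_mul_of_nonneg_right hPh hinv)
            (mul_nonneg (abs_nonneg _) hinv) (by positivity)
      _ ≤ C * ((auxH κ a + auxH κ b) * (r * (r ^ lam)⁻¹)) := by
          rw [show C * ((auxH κ a + auxH κ b) * (r * (r ^ lam)⁻¹))
              = (C * r) * ((auxH κ a + auxH κ b) * (r ^ lam)⁻¹) by ring]
          apply mul_le_mul_of_nonneg_right _ (mul_nonneg (add_nonneg hha hhb) hinv)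
          have : 4 * L ≤ C := by rw [hCdef]; linarith
          nlinarith
  · -- far regime
    rw [min_eq_left hr1.le, Real.rpow_neg hr, div_eq_mul_inv]
    have hinv : (0:ℝ) ≤ (r ^ lam)⁻¹ := inv_nonneg.2 hrκ
    have hPC : |d| * |b ^ κ - a ^ κ| ≤ C * (auxH κ a + auxH κ b) := by
      have hdP : |d| * |b ^ κ - a ^ κ| ≤ a ^ κ + b ^ κ := by
        calc |d| * |b ^ κ - a ^ κ| ≤ 1 * (a ^ κ + b ^ κ) :=
              mul_le_mul hd1 hP (abs_nonneg _) zero_le_one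
          _ = a ^ κ + b ^ κ := one_mul _
      rcases le_or_gt b 3 with hb3 | hb3
      · have hauxb : auxH κ b = b ^ κ + 1 := if_pos hb3
        have hstep : a ^ κ + b ^ κ ≤ auxH κ a + auxH κ b := by
          rw [hauxa, hauxb]; linarith
        have hC1 : 1 ≤ C := by rw [hCdef]; linarith
        calc |d| * |b ^ κ - a ^ κ| ≤ a ^ κ + b ^ κ := hdP
          _ ≤ auxH κ a + auxH κ b := hstep
          _ = 1 * (auxH κ a + auxH κ b) := (one_mul _).symm
          _ ≤ C * (auxH κ a + auxH κ b) :=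
              mul_le_mul_of_nonneg_right hC1 (add_nonneg hha hhb)
      · -- b is large: use b ≥ r/2
        have hauxb : auxH κ b = 0 := if_neg (by linarith)
        have hrb : r/2 ≤ b := by linarith
        have h1 : b ^ κ ≤ (r/2) ^ κ :=
          Real.rpow_le_rpow_of_nonpos (by linarith) hrb hκ0.le
        have h2 : (r/2) ^ κ = r ^ κ * (1/2:ℝ) ^ κ := by
          rw [show r/2 = r * (1/2) by ring, Real.mul_rpow hr (by norm_num)]
        have h3 : r ^ κ ≤ 1 := Real.rpow_le_one_of_one_le_of_nonpos hr1.le hκ0.le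
        have h4 : (1/2:ℝ) ^ κ = (2:ℝ) ^ (-κ) := by
          rw [one_div, Real.inv_rpow (by norm_num), ← Real.rpow_neg (by norm_num)]
        have h5 : (2:ℝ) ^ (-κ) ≤ 2 ^ (N:ℝ) :=
          Real.rpow_le_rpow_of_exponent_le one_le_two (by rw [hκdef]; linarith)
        have hbound : b ^ κ ≤ 2 ^ (N:ℝ) := by
          have h6 : (0:ℝ) ≤ (1/2:ℝ) ^ κ := Real.rpow_nonneg (by norm_num) _
          calc b ^ κ ≤ (r/2) ^ κ := h1
            _ = r ^ κ * (1/2:ℝ) ^ κ := h2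
            _ ≤ 1 * (1/2:ℝ) ^ κ := mul_le_mul_of_nonneg_right h3 h6
            _ = (2:ℝ) ^ (-κ) := by rw [one_mul, h4]
            _ ≤ 2 ^ (N:ℝ) := h5
        rw [hauxb, add_zero, hauxa]
        have e1 : 0 ≤ 6*L*(a ^ κ + 1) := mul_nonneg (by linarith) (by linarith)
        have e2 : 0 ≤ 2^(N:ℝ) * a ^ κ := mul_nonneg h2N.le haκ
        have hfin : a ^ κ + b ^ κ ≤ C * (a ^ κ + 1) := by
          rw [hCdef, show (6*L + 2^(N:ℝ) + 2) * (a ^ κ + 1)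
            = 6*L*(a ^ κ + 1) + 2^(N:ℝ)*a ^ κ + 2^(N:ℝ) + 2*a ^ κ + 2 by ring]
          linarith
        linarith
    calc |d| * |b ^ κ - a ^ κ| * (r ^ lam)⁻¹
        ≤ (C * (auxH κ a + auxH κ b)) * (r ^ lam)⁻¹ :=
          mul_le_mul_of_nonneg_right hPC hinv
      _ = C * ((auxH κ a + auxH κ b) * (1 * (r ^ lam)⁻¹)) := by ring

lemma realkey (N : ℕ) (hN : 1 ≤ N) {s L : ℝ} (hs0 : 0 < s) (hs1 : 2*s < 1) (hL : 0 ≤ L)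
    {a b r d : ℝ} (ha : 0 ≤ a) (hb : 0 ≤ b) (hr : 0 ≤ r)
    (hab : |a - b| ≤ r) (hrab : r ≤ a + b)
    (hd1 : |d| ≤ 1) (hdL : |d| ≤ L * |a^2 - b^2|)
    (hd2 : d ≠ 0 → a^2 < 2 ∨ b^2 < 2) :
    |d| * |b ^ (2*s-(N:ℝ)) - a ^ (2*s-(N:ℝ))| / r ^ ((N:ℝ)+2*s) ≤
      (6*L + 2^(N:ℝ) + 2) *
        ((auxH (2*s-(N:ℝ)) a + auxH (2*s-(N:ℝ)) b) * (min 1 r * r ^ (-((N:ℝ)+2*s)))) := by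
  have h2N : (0:ℝ) < 2^(N:ℝ) := Real.rpow_pos_of_pos (by norm_num) _
  have hC0 : (0:ℝ) ≤ 6*L + 2^(N:ℝ) + 2 := by linarith
  have hRHS0 : 0 ≤ (6*L + 2^(N:ℝ) + 2) *
      ((auxH (2*s-(N:ℝ)) a + auxH (2*s-(N:ℝ)) b) * (min 1 r * r ^ (-((N:ℝ)+2*s)))) :=
    mul_nonneg hC0 (mul_nonneg (add_nonneg (auxH_nonneg ha) (auxH_nonneg hb))
      (mul_nonneg (le_min zero_le_one hr) (Real.rpow_nonneg hr _)))
  rcases eq_or_ne d 0 with h0 | h0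
  · rw [h0, abs_zero, zero_mul, zero_div]
    exact hRHS0
  rcases hd2 h0 with ha2 | hb2
  · exact realkey' N hN hs0 hs1 hL ha hb hr hab hrab hd1 hdL ha2
  · have := realkey' N hN hs0 hs1 hL hb ha hr (by rwa [abs_sub_comm]) (by linarith)
      hd1 (by rwa [abs_sub_comm (b^2)]) hb2
    rw [abs_sub_comm (a ^ (2*s-(N:ℝ))), add_comm (auxH (2*s-(N:ℝ)) b)] at this
    exact this

/-- For `s ∈ (0,1/2)`, `N ≥ 1`, and a smooth cut-off `ρ` with compact support in `(-2,2)`,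
`0 ≤ ρ ≤ 1`, `ρ = 1` on `(-1,1)`, the double integral of
`(ρ(|y|²) - ρ(|z|²))(|z|^{2s-N} - |y|^{2s-N}) / |z-y|^{N+2s}` over `ℝ^N × ℝ^N`
is absolutely convergent. -/
theorem stmt3 (N : ℕ) (hN : 1 ≤ N) (s : ℝ) (hs : s ∈ Set.Ioo (0:ℝ) (1/2))
    (ρ : ℝ → ℝ) (hρ : ContDiff ℝ (⊤ : ℕ∞) ρ) (hρsupp : tsupport ρ ⊆ Set.Ioo (-2 : ℝ) 2)
    (hρ01 : ∀ t, 0 ≤ ρ t ∧ ρ t ≤ 1) (hρ1 : ∀ t ∈ Set.Ioo (-1 : ℝ) 1, ρ t = 1) :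
    Integrable (fun p : EuclideanSpace ℝ (Fin N) × EuclideanSpace ℝ (Fin N) =>
      (ρ (‖p.1‖ ^ 2) - ρ (‖p.2‖ ^ 2)) *
        (‖p.2‖ ^ (2 * s - (N : ℝ)) - ‖p.1‖ ^ (2 * s - (N : ℝ))) /
          ‖p.2 - p.1‖ ^ ((N : ℝ) + 2 * s)) := by
  obtain ⟨hs0, hs12⟩ := hs
  have hs1 : 2 * s < 1 := by linarith
  have hN1 : (1:ℝ) ≤ N := by exact_mod_cast hN
  -- Lipschitz constant of ρ
  have hcomp : HasCompactSupport ρ :=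
    IsCompact.of_isClosed_subset isCompact_Icc (isClosed_tsupport ρ)
      (hρsupp.trans Set.Ioo_subset_Icc_self)
  obtain ⟨L, hLip⟩ := ContDiff.lipschitzWith_of_hasCompactSupport hcomp hρ (by simp)
  have hLr : ∀ u v : ℝ, |ρ u - ρ v| ≤ (L:ℝ) * |u - v| := fun u v => by
    have := hLip.dist_le_mul u v
    rwa [Real.dist_eq, Real.dist_eq] at this
  have hzero : ∀ t : ℝ, 2 ≤ t → ρ t = 0 := fun t ht =>
    image_eq_zero_of_notMem_tsupport (fun hmem => by
      have := hρsupp hmem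
      rw [Set.mem_Ioo] at this
      linarith [this.2])
  -- the dominating function
  have hH : Integrable (fun y : EuclideanSpace ℝ (Fin N) => auxH (2*s-(N:ℝ)) ‖y‖) volume :=
    integrable_auxH N (by linarith) (by linarith)
  have hφi : Integrable (fun w : EuclideanSpace ℝ (Fin N) =>
      min 1 ‖w‖ * ‖w‖ ^ (-((N:ℝ) + 2*s))) volume :=
    integrable_phi N (by linarith) (by linarith) (by linarith)
  have hp1 := integrable_prod_left N hH hφi
  have hp2 := integrable_prod_right N hH hφi
  have hG : Integrable (fun q : EuclideanSpace ℝ (Fin N) × EuclideanSpace ℝ (Fin N) =>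
      (6*(L:ℝ) + 2^(N:ℝ) + 2) *
        ((auxH (2*s-(N:ℝ)) ‖q.1‖ + auxH (2*s-(N:ℝ)) ‖q.2‖) *
          (min 1 ‖q.2 - q.1‖ * ‖q.2 - q.1‖ ^ (-((N:ℝ) + 2*s)))))
      (volume : Measure (EuclideanSpace ℝ (Fin N) × EuclideanSpace ℝ (Fin N))) := by
    rw [Measure.volume_eq_prod]
    apply ((hp1.add hp2).const_mul (6*(L:ℝ) + 2^(N:ℝ) + 2)).congr
    apply ae_of_all
    intro q
    simp only [Pi.add_apply]
    ring
  have hρm : Measurable ρ := hρ.continuous.measurable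
  apply Integrable.mono' hG
  · apply Measurable.aestronglyMeasurable
    apply Measurable.div
    · apply Measurable.mul
      · exact (hρm.comp ((measurable_fst.norm).pow_const 2)).sub
          (hρm.comp ((measurable_snd.norm).pow_const 2))
      · exact ((measurable_snd.norm).pow_const _).sub ((measurable_fst.norm).pow_const _)
    · exact ((measurable_snd.sub measurable_fst).norm).pow_const _
  · apply ae_of_all
    intro q
    have expand : ‖(ρ (‖q.1‖ ^ 2) - ρ (‖q.2‖ ^ 2)) *
        (‖q.2‖ ^ (2 * s - (N : ℝ)) - ‖q.1‖ ^ (2 * s - (N : ℝ))) /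
          ‖q.2 - q.1‖ ^ ((N : ℝ) + 2 * s)‖
        = |ρ (‖q.1‖ ^ 2) - ρ (‖q.2‖ ^ 2)| *
            |‖q.2‖ ^ (2 * s - (N : ℝ)) - ‖q.1‖ ^ (2 * s - (N : ℝ))| /
              ‖q.2 - q.1‖ ^ ((N : ℝ) + 2 * s) := by
      rw [Real.norm_eq_abs, abs_div, abs_mul,
        abs_of_nonneg (Real.rpow_nonneg (norm_nonneg _) _)]
    rw [expand]
    have hab : |‖q.1‖ - ‖q.2‖| ≤ ‖q.2 - q.1‖ :=
      (norm_sub_rev q.1 q.2) ▸ abs_norm_sub_norm_le q.1 q.2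
    have hrab : ‖q.2 - q.1‖ ≤ ‖q.1‖ + ‖q.2‖ := by
      have := norm_sub_le q.2 q.1
      linarith
    have hd1 : |ρ (‖q.1‖ ^ 2) - ρ (‖q.2‖ ^ 2)| ≤ 1 := by
      rw [abs_sub_le_iff]
      constructor
      · linarith [(hρ01 (‖q.1‖^2)).2, (hρ01 (‖q.2‖^2)).1]
      · linarith [(hρ01 (‖q.2‖^2)).2, (hρ01 (‖q.1‖^2)).1]
    have hdL : |ρ (‖q.1‖ ^ 2) - ρ (‖q.2‖ ^ 2)| ≤ (L:ℝ) * |‖q.1‖^2 - ‖q.2‖^2| := hLr _ _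
    have hd2 : ρ (‖q.1‖ ^ 2) - ρ (‖q.2‖ ^ 2) ≠ 0 → ‖q.1‖^2 < 2 ∨ ‖q.2‖^2 < 2 := by
      intro hne
      by_contra hcon
      push_neg at hcon
      exact hne (by rw [hzero _ hcon.1, hzero _ hcon.2, sub_zero])
    exact realkey N hN hs0 hs1 L.coe_nonneg (norm_nonneg q.1) (norm_nonneg q.2)
      (norm_nonneg (q.2 - q.1)) hab hrab hd1 hdL hd2
end
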